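/- arXiv:2412.11496 — 2 statements merged into one kernel-verified Lean document; each statement's English description precedes it below -/
import Mathlib

section
/- With the notation above (V the N × N_r Vandermonde matrix with nodes α_1,…,α_N, G_n the N_r × N_r Vandermonde matrix with nodes α_n, α_{N+1},…,α_{N+N_r−1}, all N + N_r − 1 nodes pairwise distinct and nonzero, and S_n = V G_n^{-1}), for every subset S ⊆ {1,…,N} with |S| ≤ N_r, the submatrix of S_n consisting of the rows indexed by S has rank |S|. -/
variable {F : Type} [Field F] {N r : ℕ}

/-- The `N × (r+1)` Vandermonde matrix `V` with nodes `α_1, …, α_N`. -/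
def Vmat (α : Fin N → F) : Matrix (Fin N) (Fin (r + 1)) F :=
  Matrix.of fun i j => α i ^ (j : ℕ)

/-- The `(r+1) × (r+1)` Vandermonde matrix `G_n` with row nodes
`α_n, β_1, …, β_r` (where `β_i` plays the role of `α_{N+i}`). -/
def Gmat (α : Fin N → F) (β : Fin r → F) (n : Fin N) :
    Matrix (Fin (r + 1)) (Fin (r + 1)) F :=
  Matrix.of fun i j => ((Fin.cons (α n) β : Fin (r + 1) → F) i) ^ (j : ℕ)

/-- The `(r+1) × r` matrix `G̃` whose first row is zero and whose row `i+1`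
is the Vandermonde row `(1, β_i, …, β_i^{r-1})`. -/
def Gtil (β : Fin r → F) : Matrix (Fin (r + 1)) (Fin r) F :=
  Matrix.of fun i j => ((Fin.cons 0 (fun i' => β i' ^ (j : ℕ)) : Fin (r + 1) → F) i)

/-- The matrix `S_n = V · G_n⁻¹`. -/
noncomputable def Smat (α : Fin N → F) (β : Fin r → F) (n : Fin N) :
    Matrix (Fin N) (Fin (r + 1)) F :=
  Vmat α * (Gmat α β n)⁻¹

/-! Distinct nodes make the rows of `V` independent: their first `N` columns form a
nonsingular square Vandermonde matrix. Multiplying by `G_n⁻¹`, itself a nonsingular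
Vandermonde matrix since `α_n` differs from every `β_i`, does not change the rank. -/

theorem rank_Vmat {α : Fin N → F} (hα : Function.Injective α) (hN : N ≤ r + 1) :
    (Vmat (r := r) α).rank = N := by
  have hsquare : LinearIndependent F (Matrix.vandermonde α).row :=
    Matrix.linearIndependent_rows_of_det_ne_zero (Matrix.det_vandermonde_ne_zero_iff.mpr hα)
  have hrows : LinearIndependent F (Vmat (r := r) α).row :=
    LinearIndependent.of_comp (LinearMap.funLeft F F (Fin.castLE hN)) hsquare
  simpa using hrows.rank_matrix

theorem isUnit_det_Gmat {α : Fin N → F} {β : Fin r → F}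
    (hinj : Function.Injective (Sum.elim α β)) (n : Fin N) : IsUnit (Gmat α β n).det := by
  obtain ⟨-, hβ, hαβ⟩ := Sum.elim_injective.mp hinj
  have hnodes : Function.Injective (Fin.cons (α n) β : Fin (r + 1) → F) :=
    Fin.cons_injective_of_injective (fun ⟨i, hi⟩ => hαβ n i hi.symm) hβ
  exact (Matrix.det_vandermonde_ne_zero_iff.mpr hnodes).isUnit

theorem Smat_submatrix {M : ℕ} (α : Fin N → F) (β : Fin r → F) (n : Fin N)
    (e : Fin M → Fin N) :
    (Smat α β n).submatrix e id =
      (Vmat (α ∘ e) : Matrix (Fin M) (Fin (r + 1)) F) * (Gmat α β n)⁻¹ :=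
  rfl

theorem Smat_row_submatrix_rank_general
    {F : Type} [Field F] (N r : ℕ)
    (α : Fin N → F) (β : Fin r → F)
    (hinj : Function.Injective (Sum.elim α β))
    (n : Fin N)
    (S : Finset (Fin N)) (hS : S.card ≤ r + 1) :
    ((Smat α β n).submatrix
      (fun i : Fin S.card => ((S.orderIsoOfFin rfl i : S) : Fin N)) id).rank = S.card := by
  have hα : Function.Injective α := (Sum.elim_injective.mp hinj).1
  have hrows : Function.Injective fun i : Fin S.card => ((S.orderIsoOfFin rfl i : S) : Fin N) :=
    Subtype.val_injective.comp (S.orderIsoOfFin rfl).injective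
  rw [Smat_submatrix, Matrix.rank_mul_eq_left_of_isUnit_det _ _
    (Matrix.isUnit_nonsing_inv_det _ (isUnit_det_Gmat hinj n))]
  exact rank_Vmat (hα.comp hrows) hS

/-- Any set `S` of at most `N_r = r+1` rows of `S_n = V G_n⁻¹`
has rank `|S|`. -/
theorem Smat_row_submatrix_rank
    {F : Type} [Field F] (N r : ℕ) (hN : 1 ≤ N)
    (α : Fin N → F) (β : Fin r → F)
    (hinj : Function.Injective (Sum.elim α β))
    (h0 : ∀ x : Fin N ⊕ Fin r, Sum.elim α β x ≠ 0)
    (n : Fin N)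
    (S : Finset (Fin N)) (hS : S.card ≤ r + 1) :
    ((Smat α β n).submatrix
      (fun i : Fin S.card => ((S.orderIsoOfFin rfl i : S) : Fin N)) id).rank = S.card :=
  Smat_row_submatrix_rank_general N r α β hinj n S hS
end

section
/- Let Ω be a finite probability space, F a finite field, and let W, X_1, …, X_{N_r} be random variables on Ω with W uniformly distributed on a finite set of size q^L (so H(W) = L log q). Suppose that (i) the Shannon mutual information I(W; X_1, …, X_T) = 0, (ii) H(W | X_1, …, X_{N_r}) = 0, and (iii) each X_n takes values in a set of size at most q^{L_X}. Then L ≤ (N_r − T) · L_X. -/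
open Finset

variable {Ω : Type} [Fintype Ω]

/-- Probability that the random variable `X` takes the value `s`, for the
probability mass function `p` on the finite sample space `Ω`. -/
def probOf {S : Type} [DecidableEq S] (p : Ω → ℝ) (X : Ω → S) (s : S) : ℝ :=
  ∑ ω ∈ Finset.univ.filter (fun ω => X ω = s), p ω

/-- Shannon entropy (natural-log units) of a random variable `X` on the finite
probability space `(Ω, p)` (with the convention `0 · log 0 = 0`, which holds
definitionally since `Real.log 0 = 0`). -/
noncomputable def entropy {S : Type} [Fintype S] [DecidableEq S]
    (p : Ω → ℝ) (X : Ω → S) : ℝ :=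
  -∑ s : S, probOf p X s * Real.log (probOf p X s)

/-- Conditional Shannon entropy `H(X | Y) = H(X, Y) − H(Y)`. -/
noncomputable def condEntropy {S T : Type} [Fintype S] [DecidableEq S]
    [Fintype T] [DecidableEq T] (p : Ω → ℝ) (X : Ω → S) (Y : Ω → T) : ℝ :=
  entropy p (fun ω => (X ω, Y ω)) - entropy p Y

/-- Mutual information `I(X ; Y) = H(X) + H(Y) − H(X, Y)`. -/
noncomputable def mutualInfo {S T : Type} [Fintype S] [DecidableEq S]
    [Fintype T] [DecidableEq T] (p : Ω → ℝ) (X : Ω → S) (Y : Ω → T) : ℝ :=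
  entropy p X + entropy p Y - entropy p (fun ω => (X ω, Y ω))

lemma probOf_nonneg {S : Type} [DecidableEq S] (p : Ω → ℝ) (hp : ∀ ω, 0 ≤ p ω)
    (X : Ω → S) (s : S) : 0 ≤ probOf p X s :=
  Finset.sum_nonneg fun ω _ => hp ω

lemma sum_probOf_mul {S : Type} [Fintype S] [DecidableEq S] (p : Ω → ℝ)
    (X : Ω → S) (g : S → ℝ) :
    ∑ s : S, probOf p X s * g s = ∑ ω : Ω, p ω * g (X ω) := by
  unfold probOf
  calc ∑ s : S, (∑ ω ∈ Finset.univ.filter (fun ω => X ω = s), p ω) * g s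
      = ∑ s : S, ∑ ω ∈ Finset.univ.filter (fun ω => X ω = s), p ω * g (X ω) := by
        refine Finset.sum_congr rfl fun s _ => ?_
        rw [Finset.sum_mul]
        refine Finset.sum_congr rfl fun ω hω => ?_
        rw [(Finset.mem_filter.1 hω).2]
    _ = ∑ ω : Ω, p ω * g (X ω) := Finset.sum_fiberwise _ _ _

lemma sum_probOf {S : Type} [Fintype S] [DecidableEq S] (p : Ω → ℝ)
    (hp1 : ∑ ω : Ω, p ω = 1) (X : Ω → S) : ∑ s : S, probOf p X s = 1 := by
  have := sum_probOf_mul p X (fun _ => 1)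
  simpa [hp1] using this

lemma entropy_eq_sum_omega {S : Type} [Fintype S] [DecidableEq S] (p : Ω → ℝ)
    (X : Ω → S) :
    entropy p X = -∑ ω : Ω, p ω * Real.log (probOf p X (X ω)) := by
  rw [entropy, sum_probOf_mul p X (fun s => Real.log (probOf p X s))]

lemma probOf_le_probOf_comp {S T : Type} [DecidableEq S] [DecidableEq T]
    (p : Ω → ℝ) (hp : ∀ ω, 0 ≤ p ω) (X : Ω → S) (f : S → T) (s : S) :
    probOf p X s ≤ probOf p (fun ω => f (X ω)) (f s) := by
  refine Finset.sum_le_sum_of_subset_of_nonneg ?_ (fun ω _ _ => hp ω)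
  intro ω hω
  simp only [Finset.mem_filter, Finset.mem_univ, true_and] at *
  rw [hω]

lemma self_le_probOf {S : Type} [DecidableEq S] (p : Ω → ℝ) (hp : ∀ ω, 0 ≤ p ω)
    (X : Ω → S) (ω : Ω) : p ω ≤ probOf p X (X ω) := by
  refine Finset.single_le_sum (fun ω _ => hp ω) ?_
  simp

/-- Data processing for entropy: `H(f ∘ X) ≤ H(X)`. -/
lemma entropy_comp_le {S T : Type} [Fintype S] [DecidableEq S] [Fintype T]
    [DecidableEq T] (p : Ω → ℝ) (hp : ∀ ω, 0 ≤ p ω) (X : Ω → S) (f : S → T) :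
    entropy p (fun ω => f (X ω)) ≤ entropy p X := by
  rw [entropy_eq_sum_omega, entropy_eq_sum_omega, neg_le_neg_iff]
  refine Finset.sum_le_sum fun ω _ => ?_
  rcases eq_or_lt_of_le (hp ω) with h0 | h0
  · simp [← h0]
  · refine mul_le_mul_of_nonneg_left ?_ (hp ω)
    exact Real.log_le_log (lt_of_lt_of_le h0 (self_le_probOf p hp X ω))
      (probOf_le_probOf_comp p hp X f (X ω))

lemma probOf_fst {S T : Type} [Fintype S] [DecidableEq S] [Fintype T]
    [DecidableEq T] (p : Ω → ℝ) (X : Ω → S) (Y : Ω → T) (x : S) :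
    probOf p X x = ∑ y : T, probOf p (fun ω => (X ω, Y ω)) (x, y) := by
  unfold probOf
  rw [← Finset.sum_fiberwise (Finset.univ.filter (fun ω => X ω = x)) Y p]
  refine Finset.sum_congr rfl fun y _ => ?_
  refine Finset.sum_congr ?_ (fun _ _ => rfl)
  ext ω
  simp only [Finset.mem_filter, Finset.mem_univ, true_and, Prod.mk.injEq] <;> tauto

lemma probOf_snd {S T : Type} [Fintype S] [DecidableEq S] [Fintype T]
    [DecidableEq T] (p : Ω → ℝ) (X : Ω → S) (Y : Ω → T) (y : T) :
    probOf p Y y = ∑ x : S, probOf p (fun ω => (X ω, Y ω)) (x, y) := by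
  unfold probOf
  rw [← Finset.sum_fiberwise (Finset.univ.filter (fun ω => Y ω = y)) X p]
  refine Finset.sum_congr rfl fun x _ => ?_
  refine Finset.sum_congr ?_ (fun _ _ => rfl)
  ext ω
  simp only [Finset.mem_filter, Finset.mem_univ, true_and, Prod.mk.injEq] <;> tauto

lemma sum_pair_mul_fst {S T : Type} [Fintype S] [DecidableEq S] [Fintype T]
    [DecidableEq T] (p : Ω → ℝ) (X : Ω → S) (Y : Ω → T) (g : S → ℝ) :
    ∑ z : S × T, probOf p (fun ω => (X ω, Y ω)) z * g z.1
      = ∑ x : S, probOf p X x * g x := by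
  rw [Fintype.sum_prod_type]
  refine Finset.sum_congr rfl fun x _ => ?_
  rw [probOf_fst p X Y x, Finset.sum_mul]

lemma sum_pair_mul_snd {S T : Type} [Fintype S] [DecidableEq S] [Fintype T]
    [DecidableEq T] (p : Ω → ℝ) (X : Ω → S) (Y : Ω → T) (g : T → ℝ) :
    ∑ z : S × T, probOf p (fun ω => (X ω, Y ω)) z * g z.2
      = ∑ y : T, probOf p Y y * g y := by
  rw [Fintype.sum_prod_type_right]
  refine Finset.sum_congr rfl fun y _ => ?_
  rw [probOf_snd p X Y y, Finset.sum_mul]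

lemma probOf_pair_le_fst {S T : Type} [Fintype S] [DecidableEq S] [Fintype T]
    [DecidableEq T] (p : Ω → ℝ) (hp : ∀ ω, 0 ≤ p ω) (X : Ω → S) (Y : Ω → T)
    (x : S) (y : T) : probOf p (fun ω => (X ω, Y ω)) (x, y) ≤ probOf p X x := by
  rw [probOf_fst p X Y x]
  exact Finset.single_le_sum (fun t _ => probOf_nonneg p hp _ _) (Finset.mem_univ y)

lemma probOf_pair_le_snd {S T : Type} [Fintype S] [DecidableEq S] [Fintype T]
    [DecidableEq T] (p : Ω → ℝ) (hp : ∀ ω, 0 ≤ p ω) (X : Ω → S) (Y : Ω → T)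
    (x : S) (y : T) : probOf p (fun ω => (X ω, Y ω)) (x, y) ≤ probOf p Y y := by
  rw [probOf_snd p X Y y]
  exact Finset.single_le_sum (fun t _ => probOf_nonneg p hp (fun ω => (X ω, Y ω)) (t, y))
    (Finset.mem_univ x)

/-- Subadditivity: `H(X, Y) ≤ H(X) + H(Y)`. -/
lemma entropy_pair_le {S T : Type} [Fintype S] [DecidableEq S] [Fintype T]
    [DecidableEq T] (p : Ω → ℝ) (hp : ∀ ω, 0 ≤ p ω) (hp1 : ∑ ω : Ω, p ω = 1)
    (X : Ω → S) (Y : Ω → T) :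
    entropy p (fun ω => (X ω, Y ω)) ≤ entropy p X + entropy p Y := by
  have key : ∀ z : S × T,
      probOf p (fun ω => (X ω, Y ω)) z * (Real.log (probOf p X z.1)
        + Real.log (probOf p Y z.2) - Real.log (probOf p (fun ω => (X ω, Y ω)) z))
      ≤ probOf p X z.1 * probOf p Y z.2 - probOf p (fun ω => (X ω, Y ω)) z := by
    rintro ⟨x, y⟩
    set pxy := probOf p (fun ω => (X ω, Y ω)) (x, y) with hpxy
    rcases eq_or_lt_of_le (probOf_nonneg p hp (fun ω => (X ω, Y ω)) (x, y)) with h0 | h0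
    · have hz : pxy = 0 := by rw [hpxy, ← h0]
      rw [hz]
      simp only [zero_mul, sub_zero]
      exact mul_nonneg (probOf_nonneg p hp X x) (probOf_nonneg p hp Y y)
    · rw [← hpxy] at h0
      have hx : 0 < probOf p X x := lt_of_lt_of_le h0 (probOf_pair_le_fst p hp X Y x y)
      have hy : 0 < probOf p Y y := lt_of_lt_of_le h0 (probOf_pair_le_snd p hp X Y x y)
      have ht : 0 < probOf p X x * probOf p Y y / pxy := div_pos (mul_pos hx hy) h0
      have hlog := Real.log_le_sub_one_of_pos ht
      rw [Real.log_div (mul_pos hx hy).ne' h0.ne', Real.log_mul hx.ne' hy.ne'] at hlog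
      have h2 : pxy * (Real.log (probOf p X x) + Real.log (probOf p Y y) - Real.log pxy)
          ≤ pxy * (probOf p X x * probOf p Y y / pxy - 1) :=
        mul_le_mul_of_nonneg_left (by linarith) h0.le
      have h3 : pxy * (probOf p X x * probOf p Y y / pxy - 1)
          = probOf p X x * probOf p Y y - pxy := by
        field_simp
      linarith
  have hsum : ∑ z : S × T, (probOf p X z.1 * probOf p Y z.2
      - probOf p (fun ω => (X ω, Y ω)) z) = 0 := by
    rw [Finset.sum_sub_distrib, sum_probOf p hp1 (fun ω => (X ω, Y ω)),
      Fintype.sum_prod_type]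
    have : ∀ x : S, ∑ y : T, probOf p X x * probOf p Y y
        = probOf p X x * ∑ y : T, probOf p Y y := fun x => (Finset.mul_sum _ _ _).symm
    rw [Finset.sum_congr rfl fun x _ => this x, ← Finset.sum_mul,
      sum_probOf p hp1 X, sum_probOf p hp1 Y]
    norm_num
  have main : ∑ z : S × T, probOf p (fun ω => (X ω, Y ω)) z * (Real.log (probOf p X z.1)
      + Real.log (probOf p Y z.2) - Real.log (probOf p (fun ω => (X ω, Y ω)) z)) ≤ 0 := by
    rw [← hsum]; exact Finset.sum_le_sum fun z _ => key z
  have expand : ∑ z : S × T, probOf p (fun ω => (X ω, Y ω)) z * (Real.log (probOf p X z.1)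
      + Real.log (probOf p Y z.2) - Real.log (probOf p (fun ω => (X ω, Y ω)) z))
      = (∑ x : S, probOf p X x * Real.log (probOf p X x))
        + (∑ y : T, probOf p Y y * Real.log (probOf p Y y))
        - ∑ z : S × T, probOf p (fun ω => (X ω, Y ω)) z
            * Real.log (probOf p (fun ω => (X ω, Y ω)) z) := by
    rw [← sum_pair_mul_fst p X Y (fun x => Real.log (probOf p X x)),
      ← sum_pair_mul_snd p X Y (fun y => Real.log (probOf p Y y)),
      ← Finset.sum_add_distrib, ← Finset.sum_sub_distrib]
    refine Finset.sum_congr rfl fun z _ => by ring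
  rw [expand] at main
  unfold entropy
  linarith

/-- `H(X) ≤ log |S|`. -/
lemma entropy_le_log_card {S : Type} [Fintype S] [DecidableEq S] [Nonempty S]
    (p : Ω → ℝ) (hp : ∀ ω, 0 ≤ p ω) (hp1 : ∑ ω : Ω, p ω = 1) (X : Ω → S) :
    entropy p X ≤ Real.log (Fintype.card S) := by
  have hcard : (0 : ℝ) < Fintype.card S := by exact_mod_cast Fintype.card_pos
  have key : ∀ s : S, -(probOf p X s * Real.log (probOf p X s))
      ≤ probOf p X s * Real.log (Fintype.card S)
        + (1 / (Fintype.card S : ℝ) - probOf p X s) := by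
    intro s
    set ps := probOf p X s with hps
    rcases eq_or_lt_of_le (probOf_nonneg p hp X s) with h0 | h0
    · have hz : ps = 0 := by rw [hps, ← h0]
      rw [hz]
      simp only [zero_mul, neg_zero, zero_add, sub_zero, Real.log_zero]
      positivity
    · rw [← hps] at h0
      have ht : 0 < 1 / ((Fintype.card S : ℝ) * ps) := by positivity
      have hlog := Real.log_le_sub_one_of_pos ht
      rw [one_div, Real.log_inv, Real.log_mul hcard.ne' h0.ne'] at hlog
      have h2 : ps * (-(Real.log (Fintype.card S) + Real.log ps))
          ≤ ps * (((Fintype.card S : ℝ) * ps)⁻¹ - 1) :=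
        mul_le_mul_of_nonneg_left (by linarith) h0.le
      have h3 : ps * (((Fintype.card S : ℝ) * ps)⁻¹ - 1) = 1 / (Fintype.card S : ℝ) - ps := by
        field_simp
      nlinarith
  have hmain := Finset.sum_le_sum fun s (_ : s ∈ Finset.univ) => key s
  rw [Finset.sum_add_distrib, ← Finset.sum_mul, sum_probOf p hp1 X,
    Finset.sum_sub_distrib, sum_probOf p hp1 X, Finset.sum_const, Finset.card_univ] at hmain
  simp only [nsmul_eq_mul, mul_one_div] at hmain
  rw [entropy, ← Finset.sum_neg_distrib]
  calc ∑ s : S, -(probOf p X s * Real.log (probOf p X s))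
      ≤ 1 * Real.log (Fintype.card S) + ((Fintype.card S : ℝ) / Fintype.card S - 1) := hmain
    _ = Real.log (Fintype.card S) := by rw [div_self hcard.ne']; ring

lemma entropy_uniform {S : Type} [Fintype S] [DecidableEq S] (p : Ω → ℝ)
    (q L : ℕ) (hq : 1 ≤ q) (W : Ω → S) (hcard : Fintype.card S = q ^ L)
    (hunif : ∀ s : S, probOf p W s = 1 / (q : ℝ) ^ L) :
    entropy p W = L * Real.log q := by
  have hqpos : (0 : ℝ) < (q : ℝ) ^ L := by positivity
  rw [entropy]
  rw [Finset.sum_congr rfl fun s _ => by rw [hunif s]]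
  rw [Finset.sum_const, Finset.card_univ, hcard, nsmul_eq_mul]
  rw [one_div, Real.log_inv, Real.log_pow]
  push_cast
  field_simp

/-- Converse bound for the user-to-helper rate. If `W` is uniform
on a set of size `q^L`, `W` is independent of the first `T` messages, `W` is
determined by all `N_r` messages, and each message takes at most `q^{L_X}`
values, then `L ≤ (N_r − T) · L_X`. -/
theorem user_to_helper_converse
    {Ω : Type} [Fintype Ω] (p : Ω → ℝ)
    (hp : ∀ ω, 0 ≤ p ω) (hp1 : ∑ ω : Ω, p ω = 1)
    (q L LX Nr T : ℕ) (hq : 2 ≤ q) (hT : T ≤ Nr)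
    {WT : Type} [Fintype WT] [DecidableEq WT] (W : Ω → WT)
    (hcard : Fintype.card WT = q ^ L)
    (hunif : ∀ wv : WT, probOf p W wv = 1 / (q : ℝ) ^ L)
    {V : Type} [Fintype V] [DecidableEq V] (X : Fin Nr → Ω → V)
    (hV : Fintype.card V ≤ q ^ LX)
    (hsec : mutualInfo p W (fun ω => fun i : Fin T => X (Fin.castLE hT i) ω) = 0)
    (hdec : condEntropy p W (fun ω => fun n : Fin Nr => X n ω) = 0) :
    (L : ℝ) ≤ ((Nr : ℝ) - T) * LX := by
  have hΩ : Nonempty Ω := by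
    by_contra h
    rw [not_nonempty_iff] at h
    haveI := h
    rw [Finset.univ_eq_empty, Finset.sum_empty] at hp1
    norm_num at hp1
  obtain ⟨ω0⟩ := hΩ
  set Xall : Ω → (Fin Nr → V) := fun ω => fun n : Fin Nr => X n ω with hXall
  set Xf : Ω → (Fin T → V) := fun ω => fun i : Fin T => X (Fin.castLE hT i) ω with hXf
  set Xr : Ω → (Fin (Nr - T) → V) :=
    fun ω => fun i : Fin (Nr - T) => X ⟨T + i.val, by omega⟩ ω with hXr
  have hlq : (0 : ℝ) < Real.log q :=
    Real.log_pos (by exact_mod_cast hq.trans_lt' one_lt_two)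
  have HW : entropy p W = L * Real.log q :=
    entropy_uniform p q L (by omega) W hcard hunif
  have h1 : entropy p W + entropy p Xf = entropy p (fun ω => (W ω, Xf ω)) := by
    have := hsec
    rw [mutualInfo] at this
    linarith
  have h2 : entropy p (fun ω => (W ω, Xall ω)) = entropy p Xall := by
    have := hdec
    rw [condEntropy] at this
    linarith
  -- Xall is a function of (Xf, Xr)
  have h3 : entropy p Xall ≤ entropy p (fun ω => (Xf ω, Xr ω)) := by
    have key := entropy_comp_le p hp (fun ω => (Xf ω, Xr ω))
      (fun z : (Fin T → V) × (Fin (Nr - T) → V) =>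
        fun n : Fin Nr => if h : n.val < T then z.1 ⟨n.val, h⟩
          else z.2 ⟨n.val - T, by omega⟩)
    have heq : (fun ω => (fun z : (Fin T → V) × (Fin (Nr - T) → V) =>
        fun n : Fin Nr => if h : n.val < T then z.1 ⟨n.val, h⟩
          else z.2 ⟨n.val - T, by omega⟩) (Xf ω, Xr ω)) = Xall := by
      funext ω
      funext n
      simp only [hXf, hXr, hXall]
      by_cases h : n.val < T
      · rw [dif_pos h]
        congr 1
      · rw [dif_neg h]
        congr 1
        ext
        simp
        omega
    rw [heq] at key
    exact key
  have h4 : entropy p (fun ω => (Xf ω, Xr ω)) ≤ entropy p Xf + entropy p Xr :=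
    entropy_pair_le p hp hp1 Xf Xr
  have h5 : entropy p (fun ω => (W ω, Xf ω)) ≤ entropy p (fun ω => (W ω, Xall ω)) := by
    have key := entropy_comp_le p hp (fun ω => (W ω, Xall ω))
      (fun z : WT × (Fin Nr → V) => (z.1, fun i : Fin T => z.2 (Fin.castLE hT i)))
    exact key
  have hne : Nonempty (Fin (Nr - T) → V) := ⟨Xr ω0⟩
  have h6 : entropy p Xr ≤ Real.log (Fintype.card (Fin (Nr - T) → V)) :=
    entropy_le_log_card p hp hp1 Xr
  have h7 : Real.log (Fintype.card (Fin (Nr - T) → V))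
      ≤ ((Nr - T : ℕ) : ℝ) * (LX * Real.log q) := by
    have hcard2 : Fintype.card (Fin (Nr - T) → V) ≤ q ^ (LX * (Nr - T)) := by
      rw [Fintype.card_fun, Fintype.card_fin, pow_mul]
      exact Nat.pow_le_pow_left hV _
    have hpos : 0 < Fintype.card (Fin (Nr - T) → V) := Fintype.card_pos
    calc Real.log (Fintype.card (Fin (Nr - T) → V))
        ≤ Real.log ((q : ℝ) ^ (LX * (Nr - T))) := by
          apply Real.log_le_log (by exact_mod_cast hpos)
          exact_mod_cast hcard2
      _ = ((LX * (Nr - T) : ℕ) : ℝ) * Real.log q := by rw [Real.log_pow]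
      _ = ((Nr - T : ℕ) : ℝ) * (LX * Real.log q) := by push_cast; ring
  have hfinal : (L : ℝ) * Real.log q ≤ ((Nr - T : ℕ) : ℝ) * (LX * Real.log q) := by
    linarith
  have hcast : ((Nr - T : ℕ) : ℝ) = (Nr : ℝ) - T := by
    push_cast [Nat.cast_sub hT]
    ring
  rw [hcast] at hfinal
  have := le_of_mul_le_mul_right (by linarith [hfinal] : (L : ℝ) * Real.log q
    ≤ (((Nr : ℝ) - T) * LX) * Real.log q) hlq
  exact this
end
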